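/- arXiv:2303.01379 — 4 statements merged into one kernel-verified Lean document; each statement's English description precedes it below -/
import Mathlib

section
/- For the Euler-angle Jacobian matrix J_{Oη}(φ,θ) = [[1, sin(φ)tan(θ), cos(φ)tan(θ)],[0, cos(φ), -sin(φ)],[0, sin(φ)/cos(θ), cos(φ)/cos(θ)]], the operator norm of its inverse satisfies ‖J_{Oη}(φ,θ)^{-1}‖ = sqrt(1 + |sin(θ)|) ≤ sqrt(2) for all φ ∈ ℝ and θ with cos(θ) ≠ 0. -/
/-!
Explicitly, `J⁻¹ = [[1, 0, -sin θ], [0, cos φ, sin φ cos θ], [0, -sin φ, cos φ cos θ]]`. Its columns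
are unit vectors whose only non-zero inner product is `⟨c₀, c₂⟩ = -sin θ`, so
`‖J⁻¹ x‖² = ‖x‖² - 2 sin θ x₀ x₂`, a quadratic form with eigenvalues `1` and `1 ± sin θ`. The
largest, `1 + |sin θ|`, is attained at `x = (1, 0, ∓1)`.
-/

/-- The Euler-angle Jacobian mapping angular velocity to Euler-angle rates. -/
noncomputable def JOeta (φ θ : ℝ) : Matrix (Fin 3) (Fin 3) ℝ :=
  !![1, Real.sin φ * Real.tan θ, Real.cos φ * Real.tan θ;
     0, Real.cos φ, -Real.sin φ;
     0, Real.sin φ / Real.cos θ, Real.cos φ / Real.cos θ]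

/-- The operator (largest singular value) norm of a 3×3 real matrix. -/
noncomputable def opNorm3 (A : Matrix (Fin 3) (Fin 3) ℝ) : ℝ :=
  ‖Matrix.toEuclideanCLM (𝕜 := ℝ) A‖

open Real

theorem ContinuousLinearMap.opNorm_eq_sqrt_of_sq_le {𝕜 E F : Type*} [NontriviallyNormedField 𝕜]
    [NormedAddCommGroup E] [NormedSpace 𝕜 E] [NormedAddCommGroup F] [NormedSpace 𝕜 F]
    (T : E →L[𝕜] F) {c : ℝ} (hc : 0 ≤ c) (hle : ∀ x, ‖T x‖ ^ 2 ≤ c * ‖x‖ ^ 2)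
    {v : E} (hv : v ≠ 0) (hv_eq : ‖T v‖ ^ 2 = c * ‖v‖ ^ 2) : ‖T‖ = √c := by
  have sq_root {x : E} {a : ℝ} (h : ‖T x‖ ^ 2 = a) : ‖T x‖ = √a := by
    rw [← h, sqrt_sq (norm_nonneg _)]
  have h_mul_sq (x : E) : √(c * ‖x‖ ^ 2) = √c * ‖x‖ := by
    rw [sqrt_mul hc, sqrt_sq (norm_nonneg x)]
  refine le_antisymm (T.opNorm_le_bound (sqrt_nonneg c) fun x => ?_) ?_
  · rw [← h_mul_sq]
    exact le_sqrt_of_sq_le (hle x)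
  · have h := T.le_opNorm v
    rw [sq_root hv_eq, h_mul_sq] at h
    exact le_of_mul_le_mul_right h (norm_pos_iff.mpr hv)

theorem sq_add_sq_sub_two_mul_mul_le (s a b : ℝ) :
    a ^ 2 + b ^ 2 - 2 * s * a * b ≤ (1 + |s|) * (a ^ 2 + b ^ 2) := by
  rcases le_total 0 s with hs | hs
  · rw [abs_of_nonneg hs]; nlinarith [mul_nonneg hs (sq_nonneg (a + b))]
  · rw [abs_of_nonpos hs]; nlinarith [mul_nonneg (neg_nonneg.mpr hs) (sq_nonneg (a - b))]

noncomputable def JOetaInv (φ θ : ℝ) : Matrix (Fin 3) (Fin 3) ℝ :=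
  !![1, 0, -sin θ;
     0, cos φ, sin φ * cos θ;
     0, -sin φ, cos φ * cos θ]

theorem JOeta_mul_JOetaInv (φ θ : ℝ) (hθ : cos θ ≠ 0) : JOeta φ θ * JOetaInv φ θ = 1 := by
  have hφ := sin_sq_add_cos_sq φ
  rw [JOeta, JOetaInv, Matrix.mul_fin_three, Matrix.one_fin_three, tan_eq_sin_div_cos]
  congr 1
  simp only [Matrix.vecCons_inj, and_true]
  refine ⟨⟨?_, ?_, ?_⟩, ⟨?_, ?_, ?_⟩, ⟨?_, ?_, ?_⟩⟩ <;> field_simp <;> grind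

theorem inv_JOeta (φ θ : ℝ) (hθ : cos θ ≠ 0) : (JOeta φ θ)⁻¹ = JOetaInv φ θ :=
  Matrix.inv_eq_right_inv (JOeta_mul_JOetaInv φ θ hθ)

theorem norm_sq_toEuclideanCLM_JOetaInv (φ θ : ℝ) (x : EuclideanSpace ℝ (Fin 3)) :
    ‖Matrix.toEuclideanCLM (𝕜 := ℝ) (JOetaInv φ θ) x‖ ^ 2 = ‖x‖ ^ 2 - 2 * sin θ * x 0 * x 2 := by
  simp only [JOetaInv, EuclideanSpace.real_norm_sq_eq, Matrix.ofLp_toEuclideanCLM, Matrix.mulVec,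
    dotProduct, Matrix.of_apply, Matrix.cons_val', Matrix.cons_val_fin_one, Fin.sum_univ_three,
    Matrix.cons_val_zero, Matrix.cons_val_one, Matrix.cons_val]
  linear_combination x 1 ^ 2 * sin_sq_add_cos_sq φ + x 2 ^ 2 * cos θ ^ 2 * sin_sq_add_cos_sq φ +
    x 2 ^ 2 * sin_sq_add_cos_sq θ

theorem opNorm3_JOetaInv (φ θ : ℝ) : opNorm3 (JOetaInv φ θ) = √(1 + |sin θ|) := by
  obtain ⟨ε, hε_sq, hε_mul⟩ : ∃ ε : ℝ, ε ^ 2 = 1 ∧ sin θ * ε = -|sin θ| := by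
    rcases le_total 0 (sin θ) with hs | hs
    · exact ⟨-1, by norm_num, by rw [abs_of_nonneg hs]; ring⟩
    · exact ⟨1, by norm_num, by rw [abs_of_nonpos hs]; ring⟩
  refine (Matrix.toEuclideanCLM (𝕜 := ℝ) (JOetaInv φ θ)).opNorm_eq_sqrt_of_sq_le (by positivity)
    (fun x => ?_) (v := !₂[1, 0, ε]) ?_ ?_
  · rw [norm_sq_toEuclideanCLM_JOetaInv, EuclideanSpace.real_norm_sq_eq, Fin.sum_univ_three]
    nlinarith [sq_add_sq_sub_two_mul_mul_le (sin θ) (x 0) (x 2), sq_nonneg (x 1), abs_nonneg (sin θ)]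
  · intro h
    simpa using congrArg (· 0) h
  · rw [norm_sq_toEuclideanCLM_JOetaInv, EuclideanSpace.real_norm_sq_eq, Fin.sum_univ_three]
    simp only [Fin.isValue, Matrix.cons_val_zero, Matrix.cons_val_one, Matrix.cons_val, one_pow,
      ne_eq, OfNat.ofNat_ne_zero, not_false_eq_true, zero_pow, add_zero, mul_one]
    linear_combination -|sin θ| * hε_sq - 2 * hε_mul

theorem stmt0 (φ θ : ℝ) (hθ : Real.cos θ ≠ 0) :
    opNorm3 (JOeta φ θ)⁻¹ = Real.sqrt (1 + |Real.sin θ|) ∧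
      Real.sqrt (1 + |Real.sin θ|) ≤ Real.sqrt 2 := by
  rw [inv_JOeta φ θ hθ, opNorm3_JOetaInv]
  refine ⟨rfl, sqrt_le_sqrt ?_⟩
  linarith [abs_sin_le_one θ]
end

section
/- For the Euler-angle Jacobian matrix J_{Oη}(φ,θ) defined by [[1, sin(φ)tan(θ), cos(φ)tan(θ)],[0, cos(φ), -sin(φ)],[0, sin(φ)/cos(θ), cos(φ)/cos(θ)]], its operator norm satisfies ‖J_{Oη}(φ,θ)‖ = sqrt((|sin(θ)|+1)/(1 - sin²(θ))) for all θ with cos(θ) ≠ 0. -/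
open Real Matrix

theorem ContinuousLinearMap.opNorm_eq_of_sq_le_of_sq_eq {𝕜 E F : Type*}
    [NontriviallyNormedField 𝕜] [SeminormedAddCommGroup E] [NormedSpace 𝕜 E]
    [SeminormedAddCommGroup F] [NormedSpace 𝕜 F] (f : E →L[𝕜] F) {r : ℝ} (hr : 0 ≤ r)
    (hle : ∀ x, ‖f x‖ ^ 2 ≤ r ^ 2 * ‖x‖ ^ 2) {x₀ : E} (hx₀ : ‖x₀‖ ≠ 0)
    (heq : ‖f x₀‖ ^ 2 = r ^ 2 * ‖x₀‖ ^ 2) : ‖f‖ = r := by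
  rw [← mul_pow] at heq
  refine le_antisymm (f.opNorm_le_bound hr fun x ↦ ?_) ?_
  · exact (pow_le_pow_iff_left₀ (norm_nonneg _) (by positivity) two_ne_zero).mp
      (by rw [mul_pow]; exact hle x)
  · refine le_of_mul_le_mul_right ?_ ((norm_nonneg _).lt_of_ne' hx₀)
    rw [← (pow_left_inj₀ (norm_nonneg _) (by positivity) two_ne_zero).mp heq]
    exact f.le_opNorm x₀

theorem opNorm3_mul_of_mem_unitaryGroup (A : Matrix (Fin 3) (Fin 3) ℝ)
    {U : Matrix (Fin 3) (Fin 3) ℝ} (hU : U ∈ unitaryGroup (Fin 3) ℝ) :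
    opNorm3 (A * U) = opNorm3 A := by
  rw [opNorm3, opNorm3, map_mul, CStarRing.norm_mul_mem_unitary _ (Unitary.map_mem _ hU)]

noncomputable def xAxisRotation (φ : ℝ) : Matrix (Fin 3) (Fin 3) ℝ :=
  !![1, 0, 0; 0, cos φ, -sin φ; 0, sin φ, cos φ]

theorem xAxisRotation_mem_unitaryGroup (φ : ℝ) : xAxisRotation φ ∈ unitaryGroup (Fin 3) ℝ := by
  rw [mem_unitaryGroup_iff, star_eq_conjTranspose, conjTranspose_eq_transpose_of_trivial]
  ext i j
  fin_cases i <;> fin_cases j <;>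
    simp [xAxisRotation, mul_apply, Fin.sum_univ_three, ← sq, mul_comm]

theorem JOeta_eq_mul_xAxisRotation (φ θ : ℝ) : JOeta φ θ = JOeta 0 θ * xAxisRotation φ := by
  ext i j
  fin_cases i <;> fin_cases j <;>
    simp [JOeta, xAxisRotation, mul_apply, Fin.sum_univ_three] <;> ring

theorem norm_toEuclideanCLM_JOeta_zero_sq (θ : ℝ) (hθ : cos θ ≠ 0)
    (x : EuclideanSpace ℝ (Fin 3)) :
    ‖toEuclideanCLM (𝕜 := ℝ) (JOeta 0 θ) x‖ ^ 2 =
      ((cos θ * x 0 + sin θ * x 2) ^ 2 + x 2 ^ 2) / cos θ ^ 2 + x 1 ^ 2 := by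
  rw [← WithLp.toLp_ofLp (x := x), toEuclideanCLM_toLp, EuclideanSpace.real_norm_sq_eq]
  simp only [mulVec, dotProduct, JOeta, sin_zero, tan_eq_sin_div_cos, zero_mul, cos_zero, one_mul,
    neg_zero, zero_div, one_div, of_apply, cons_val', cons_val_fin_one, Fin.sum_univ_three,
    Fin.isValue, cons_val_zero, cons_val_one, cons_val, add_zero, zero_add]
  field_simp
  ring

/- The quadratic form on the left has Gram matrix `!![c ^ 2, c * s; c * s, 1 + s ^ 2]`, with
eigenvalues `1 ± |s|`. -/
theorem mul_add_mul_sq_add_sq_le {s c : ℝ} (h : s ^ 2 + c ^ 2 = 1) (x y : ℝ) :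
    (c * x + s * y) ^ 2 + y ^ 2 ≤ (1 + |s|) * (x ^ 2 + y ^ 2) := by
  rcases abs_cases s with ⟨hs, hs0⟩ | ⟨hs, hs0⟩ <;> rw [hs]
  · have key : (1 + s) * ((1 + s) * (x ^ 2 + y ^ 2) - ((c * x + s * y) ^ 2 + y ^ 2)) =
        s * ((1 + s) * x - c * y) ^ 2 := by
      linear_combination (-(1 + s) * x ^ 2 - s * y ^ 2) * h
    nlinarith [mul_nonneg hs0 (sq_nonneg ((1 + s) * x - c * y))]
  · have key : (1 - s) * ((1 + -s) * (x ^ 2 + y ^ 2) - ((c * x + s * y) ^ 2 + y ^ 2)) =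
        -s * ((1 - s) * x + c * y) ^ 2 := by
      linear_combination (-(1 - s) * x ^ 2 + s * y ^ 2) * h
    nlinarith [mul_nonneg (neg_nonneg.mpr hs0.le) (sq_nonneg ((1 - s) * x + c * y))]

theorem exists_mul_add_mul_sq_add_sq_eq {s c : ℝ} (h : s ^ 2 + c ^ 2 = 1) :
    ∃ x y, 0 < y ∧ (c * x + s * y) ^ 2 + y ^ 2 = (1 + |s|) * (x ^ 2 + y ^ 2) := by
  rcases abs_cases s with ⟨hs, hs0⟩ | ⟨hs, hs0⟩ <;> rw [hs]
  · exact ⟨c, 1 + s, by linarith, by linear_combination (s + s ^ 2 + c ^ 2) * h⟩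
  · exact ⟨-c, 1 - s, by linarith, by linear_combination (-s + s ^ 2 + c ^ 2) * h⟩

theorem opNorm3_JOeta_zero (θ : ℝ) (hθ : cos θ ≠ 0) :
    opNorm3 (JOeta 0 θ) = √((1 + |sin θ|) / cos θ ^ 2) := by
  have hsc : sin θ ^ 2 + cos θ ^ 2 = 1 := sin_sq_add_cos_sq θ
  have hc : 0 < cos θ ^ 2 := by positivity
  have hr : 1 ≤ (1 + |sin θ|) / cos θ ^ 2 := by
    rw [one_le_div hc]; nlinarith [abs_nonneg (sin θ), sq_nonneg (sin θ)]
  obtain ⟨a, b, hb, hab⟩ := exists_mul_add_mul_sq_add_sq_eq hsc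
  refine ContinuousLinearMap.opNorm_eq_of_sq_le_of_sq_eq _ (x₀ := !₂[a, 0, b]) (sqrt_nonneg _)
    (fun x ↦ ?_) ?_ ?_
  · rw [norm_toEuclideanCLM_JOeta_zero_sq θ hθ, EuclideanSpace.real_norm_sq_eq,
      Fin.sum_univ_three, sq_sqrt (by positivity)]
    calc ((cos θ * x 0 + sin θ * x 2) ^ 2 + x 2 ^ 2) / cos θ ^ 2 + x 1 ^ 2
        ≤ (1 + |sin θ|) * (x 0 ^ 2 + x 2 ^ 2) / cos θ ^ 2 + (1 + |sin θ|) / cos θ ^ 2 * x 1 ^ 2 :=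
          add_le_add (div_le_div_of_nonneg_right (mul_add_mul_sq_add_sq_le hsc _ _) hc.le)
            (le_mul_of_one_le_left (sq_nonneg _) hr)
      _ = (1 + |sin θ|) / cos θ ^ 2 * (x 0 ^ 2 + x 1 ^ 2 + x 2 ^ 2) := by ring
  · exact norm_ne_zero_iff.mpr fun h0 ↦ by simpa [hb.ne'] using congr_arg (· 2) h0
  · rw [norm_toEuclideanCLM_JOeta_zero_sq θ hθ, EuclideanSpace.real_norm_sq_eq,
      Fin.sum_univ_three, sq_sqrt (by positivity)]
    change ((cos θ * a + sin θ * b) ^ 2 + b ^ 2) / cos θ ^ 2 + 0 ^ 2 =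
      (1 + |sin θ|) / cos θ ^ 2 * (a ^ 2 + 0 ^ 2 + b ^ 2)
    rw [hab]
    ring

theorem stmt1 (φ θ : ℝ) (hθ : Real.cos θ ≠ 0) :
    opNorm3 (JOeta φ θ) =
      Real.sqrt ((|Real.sin θ| + 1) / (1 - Real.sin θ ^ 2)) := by
  rw [JOeta_eq_mul_xAxisRotation,
    opNorm3_mul_of_mem_unitaryGroup _ (xAxisRotation_mem_unitaryGroup φ), opNorm3_JOeta_zero θ hθ,
    ← cos_sq', add_comm]
end

section
/- Suppose Ṁ_O - 2C_O and Ṁ - 2C are skew-symmetric matrices (of sizes 6×6 and 6N×6N respectively), G ∈ ℝ^{6×6N} is a differentiable matrix function of time, and define M̃ = M_O + G M Gᵀ, C̃ = C_O + G C Gᵀ + G M Ġᵀ, where M is symmetric. Then the matrix d/dt(M̃) - 2C̃ is skew-symmetric, i.e., equals the negative of its transpose. -/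
/-! With `M̃ = M_O + G M Gᵀ`, the product rule gives
`d/dt M̃ - 2 C̃ = (Ṁ_O - 2 C_O) + G (Ṁ - 2 C) Gᵀ + (Ġ M Gᵀ - G M Ġᵀ)`.
The first two summands are skew-symmetric by hypothesis (conjugation by `G` preserves
skew-symmetry), and since `M` is symmetric the last one is `X - Xᵀ` for `X = Ġ M Gᵀ`. -/

open Matrix

namespace Matrix

section Algebra

variable {R : Type*} [CommRing R] {m n : Type*} [Fintype n]

theorem transpose_mul_mul_transpose_eq_neg {A : Matrix n n R} (hA : Aᵀ = -A) (G : Matrix m n R) :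
    (G * A * Gᵀ)ᵀ = -(G * A * Gᵀ) := by
  rw [transpose_mul, transpose_mul, transpose_transpose, hA, Matrix.neg_mul, Matrix.mul_neg,
    Matrix.mul_assoc]

theorem transpose_sub_transpose_eq_neg (X : Matrix m m R) : (X - Xᵀ)ᵀ = -(X - Xᵀ) := by
  rw [transpose_sub, transpose_transpose, neg_sub]

theorem transpose_add_eq_neg {A B : Matrix m m R} (hA : Aᵀ = -A) (hB : Bᵀ = -B) :
    (A + B)ᵀ = -(A + B) := by
  rw [transpose_add, hA, hB, neg_add]

/-- The skew-symmetry of `d/dt (G M Gᵀ) - 2 (G C Gᵀ + G M Ġᵀ)`, in terms of `Ġ = G'` and `Ṁ = M'`. -/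
theorem transpose_conj_derivative_sub_eq_neg {G G' : Matrix m n R} {M M' C : Matrix n n R}
    (hM : M.IsSymm) (hskew : (M' - 2 • C)ᵀ = -(M' - 2 • C)) :
    ((G' * M * Gᵀ + G * M' * Gᵀ + G * M * G'ᵀ) - 2 • (G * C * Gᵀ + G * M * G'ᵀ))ᵀ =
      -((G' * M * Gᵀ + G * M' * Gᵀ + G * M * G'ᵀ) - 2 • (G * C * Gᵀ + G * M * G'ᵀ)) := by
  have hX : (G' * M * Gᵀ)ᵀ = G * M * G'ᵀ := by
    rw [transpose_mul, transpose_mul, transpose_transpose, hM.eq, Matrix.mul_assoc]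
  have hsplit : (G' * M * Gᵀ + G * M' * Gᵀ + G * M * G'ᵀ) - 2 • (G * C * Gᵀ + G * M * G'ᵀ) =
      G * (M' - 2 • C) * Gᵀ + (G' * M * Gᵀ - (G' * M * Gᵀ)ᵀ) := by
    rw [hX]
    simp only [smul_add, Matrix.mul_sub, Matrix.sub_mul, Matrix.mul_smul, Matrix.smul_mul]
    abel
  rw [hsplit]
  exact transpose_add_eq_neg (transpose_mul_mul_transpose_eq_neg hskew G)
    (transpose_sub_transpose_eq_neg _)

end Algebra

section Derivative

variable {𝕜 : Type*} [NontriviallyNormedField 𝕜] {l m n : Type*} {t : 𝕜}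

theorem hasDerivAt_mul_apply [Fintype m] {A : 𝕜 → Matrix l m 𝕜} {B : 𝕜 → Matrix m n 𝕜}
    {A' : Matrix l m 𝕜} {B' : Matrix m n 𝕜}
    (hA : ∀ i j, HasDerivAt (fun s => A s i j) (A' i j) t)
    (hB : ∀ i j, HasDerivAt (fun s => B s i j) (B' i j) t) (i : l) (k : n) :
    HasDerivAt (fun s => (A s * B s) i k) ((A' * B t + A t * B') i k) t := by
  simp only [mul_apply, add_apply, ← Finset.sum_add_distrib]
  exact HasDerivAt.fun_sum fun j _ => (hA i j).mul (hB j k)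

theorem hasDerivAt_mul_mul_transpose_apply [Fintype n] {G : 𝕜 → Matrix m n 𝕜}
    {M : 𝕜 → Matrix n n 𝕜} {G' : Matrix m n 𝕜} {M' : Matrix n n 𝕜}
    (hG : ∀ i j, HasDerivAt (fun s => G s i j) (G' i j) t)
    (hM : ∀ i j, HasDerivAt (fun s => M s i j) (M' i j) t) (i j : m) :
    HasDerivAt (fun s => (G s * M s * (G s)ᵀ) i j)
      ((G' * M t * (G t)ᵀ + G t * M' * (G t)ᵀ + G t * M t * G'ᵀ) i j) t := by
  have h := hasDerivAt_mul_apply (hasDerivAt_mul_apply hG hM) (B := fun s => (G s)ᵀ)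
    (fun i j => hG j i) i j
  rwa [Matrix.add_mul] at h

end Derivative

end Matrix

theorem stmt4 (N : ℕ)
    (MO MO' CO : ℝ → Matrix (Fin 6) (Fin 6) ℝ)
    (M M' C : ℝ → Matrix (Fin (6 * N)) (Fin (6 * N)) ℝ)
    (G G' : ℝ → Matrix (Fin 6) (Fin (6 * N)) ℝ)
    (D : ℝ → Matrix (Fin 6) (Fin 6) ℝ)
    -- entrywise derivatives of M_O, M and G
    (hMO : ∀ t i j, HasDerivAt (fun s => MO s i j) (MO' t i j) t)
    (hM : ∀ t i j, HasDerivAt (fun s => M s i j) (M' t i j) t)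
    (hG : ∀ t i j, HasDerivAt (fun s => G s i j) (G' t i j) t)
    -- skew-symmetry of Ṁ_O - 2C_O and Ṁ - 2C
    (hskewO : ∀ t, (MO' t - 2 • CO t)ᵀ = -(MO' t - 2 • CO t))
    (hskew : ∀ t, (M' t - 2 • C t)ᵀ = -(M' t - 2 • C t))
    -- M symmetric
    (hMsym : ∀ t, (M t).IsSymm)
    -- D is the entrywise derivative of M̃ = M_O + G M Gᵀ
    (hD : ∀ t i j, HasDerivAt (fun s => (MO s + G s * M s * (G s)ᵀ) i j) (D t i j) t) :
    -- d/dt(M̃) - 2C̃ is skew-symmetric, with C̃ = C_O + G C Gᵀ + G M Ġᵀ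
    ∀ t, (D t - 2 • (CO t + G t * C t * (G t)ᵀ + G t * M t * (G' t)ᵀ))ᵀ
        = -(D t - 2 • (CO t + G t * C t * (G t)ᵀ + G t * M t * (G' t)ᵀ)) := by
  intro t
  have hD_eq : D t = MO' t +
      (G' t * M t * (G t)ᵀ + G t * M' t * (G t)ᵀ + G t * M t * (G' t)ᵀ) := by
    ext i j
    exact (hD t i j).unique
      ((hMO t i j).add (hasDerivAt_mul_mul_transpose_apply (hG t) (hM t) i j))
  have hsplit : D t - 2 • (CO t + G t * C t * (G t)ᵀ + G t * M t * (G' t)ᵀ) =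
      (MO' t - 2 • CO t) + ((G' t * M t * (G t)ᵀ + G t * M' t * (G t)ᵀ + G t * M t * (G' t)ᵀ)
        - 2 • (G t * C t * (G t)ᵀ + G t * M t * (G' t)ᵀ)) := by
    rw [hD_eq, add_assoc (CO t), smul_add, smul_add]
    abel
  rw [hsplit]
  exact transpose_add_eq_neg (hskewO t) (transpose_conj_derivative_sub_eq_neg (hMsym t) (hskew t))
end

section
/- Let μ > 0 and let δ be a constant satisfying 0 < δ < (sqrt(μ²+1) - 1)/(sqrt(μ²+1) + 1). Let W ∈ ℝ^{3×3} with ‖W‖ ≤ δ (operator norm). Then for every nonzero y ∈ ℝ³, the angle θ_W between y and (I₃ - W)y satisfies cos(θ_W) ≥ (1-δ)/(1+δ) > 1/sqrt(μ²+1), and in particular |θ_W| < arctan(μ). -/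
open Matrix

/-! Perturbing `y` by a vector `w` of norm at most `δ ‖y‖` moves the numerator `⟪y, y - w⟫` of the
cosine down to at least `(1 - δ) ‖y‖²` and its denominator `‖y‖ ‖y - w‖` up to at most
`(1 + δ) ‖y‖²`, so the cosine stays above `(1 - δ) / (1 + δ)`. For `δ` below `(s - 1) / (s + 1)`,
with `s = √(μ² + 1)`, this bound exceeds `1 / s = cos (arctan μ)`. -/

section Perturbation

variable {E : Type*} [NormedAddCommGroup E] [InnerProductSpace ℝ E]

theorem one_sub_mul_norm_sq_le_inner_sub {y w : E} {δ : ℝ} (hw : ‖w‖ ≤ δ * ‖y‖) :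
    (1 - δ) * ‖y‖ ^ 2 ≤ inner ℝ y (y - w) := by
  have hyw : inner ℝ y w ≤ δ * ‖y‖ ^ 2 :=
    calc inner ℝ y w ≤ ‖y‖ * ‖w‖ := real_inner_le_norm y w
      _ ≤ ‖y‖ * (δ * ‖y‖) := mul_le_mul_of_nonneg_left hw (norm_nonneg y)
      _ = δ * ‖y‖ ^ 2 := by ring
  rw [inner_sub_right, real_inner_self_eq_norm_sq]
  linarith

theorem one_sub_div_one_add_le_inner_sub_div {y w : E} {δ : ℝ} (hδ : δ < 1)
    (hw : ‖w‖ ≤ δ * ‖y‖) (hy : y ≠ 0) :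
    (1 - δ) / (1 + δ) ≤ inner ℝ y (y - w) / (‖y‖ * ‖y - w‖) := by
  have hy0 : 0 < ‖y‖ := norm_pos_iff.mpr hy
  have hδ0 : 0 ≤ δ := nonneg_of_mul_nonneg_left ((norm_nonneg w).trans hw) hy0
  have hlower : (1 - δ) * ‖y‖ ≤ ‖y - w‖ := by
    linarith [norm_sub_norm_le y w]
  have hupper : ‖y - w‖ ≤ (1 + δ) * ‖y‖ := by
    linarith [norm_sub_le y w]
  have hinner := one_sub_mul_norm_sq_le_inner_sub hw
  have hyw0 : 0 < ‖y - w‖ := lt_of_lt_of_le (by nlinarith) hlower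
  rw [div_le_div_iff₀ (by linarith) (by positivity)]
  calc (1 - δ) * (‖y‖ * ‖y - w‖) ≤ (1 - δ) * (‖y‖ * ((1 + δ) * ‖y‖)) := by gcongr
    _ = (1 - δ) * ‖y‖ ^ 2 * (1 + δ) := by ring
    _ ≤ inner ℝ y (y - w) * (1 + δ) := by gcongr

end Perturbation

theorem InnerProductGeometry.angle_lt_arccos_of_lt_inner_div
    {E : Type*} [NormedAddCommGroup E] [InnerProductSpace ℝ E] {x y : E} {c : ℝ}
    (hc : -1 ≤ c) (hlt : c < inner ℝ x y / (‖x‖ * ‖y‖)) :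
    InnerProductGeometry.angle x y < Real.arccos c :=
  Real.strictAntiOn_arccos ⟨hc, hlt.le.trans (le_abs_self _ |>.trans
      (abs_real_inner_div_norm_mul_norm_le_one x y))⟩
    ⟨by linarith, (le_abs_self _).trans (abs_real_inner_div_norm_mul_norm_le_one x y)⟩ hlt

theorem one_div_lt_one_sub_div_one_add {s δ : ℝ} (hs : 0 < s) (hδ0 : -1 < δ)
    (hδ : δ < (s - 1) / (s + 1)) : 1 / s < (1 - δ) / (1 + δ) := by
  rw [lt_div_iff₀ (by linarith)] at hδ
  rw [div_lt_div_iff₀ hs (by linarith)]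
  linarith

theorem stmt12_general (μ δ : ℝ) (hμ : 0 < μ)
    (hδ : δ < (Real.sqrt (μ ^ 2 + 1) - 1) / (Real.sqrt (μ ^ 2 + 1) + 1))
    (W : Matrix (Fin 3) (Fin 3) ℝ) (hW : opNorm3 W ≤ δ)
    (y : EuclideanSpace ℝ (Fin 3)) (hy : y ≠ 0) :
    (1 - δ) / (1 + δ) ≤
        (inner ℝ y (Matrix.toEuclideanCLM (𝕜 := ℝ) (1 - W) y) : ℝ) /
          (‖y‖ * ‖Matrix.toEuclideanCLM (𝕜 := ℝ) (1 - W) y‖) ∧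
      1 / Real.sqrt (μ ^ 2 + 1) < (1 - δ) / (1 + δ) ∧
      InnerProductGeometry.angle y (Matrix.toEuclideanCLM (𝕜 := ℝ) (1 - W) y) <
        Real.arctan μ := by
  set s := Real.sqrt (μ ^ 2 + 1)
  have hδ0 : 0 ≤ δ := (norm_nonneg _).trans hW
  have hs : 1 < s := Real.lt_sqrt_of_sq_lt (by nlinarith)
  have hδ1 : δ < 1 := hδ.trans_le ((div_le_one (by linarith)).mpr (by linarith))
  have hWy : ‖toEuclideanCLM (𝕜 := ℝ) W y‖ ≤ δ * ‖y‖ :=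
    (ContinuousLinearMap.le_opNorm _ y).trans (mul_le_mul_of_nonneg_right hW (norm_nonneg y))
  have hsub : toEuclideanCLM (𝕜 := ℝ) (1 - W) y = y - toEuclideanCLM (𝕜 := ℝ) W y := by
    rw [map_sub, map_one]; rfl
  have hcos := one_sub_div_one_add_le_inner_sub_div hδ1 hWy hy
  have hbound : 1 / s < (1 - δ) / (1 + δ) :=
    one_div_lt_one_sub_div_one_add (by linarith) (by linarith) hδ
  rw [hsub]
  refine ⟨hcos, hbound, ?_⟩
  rw [Real.arctan_eq_arccos hμ.le, add_comm 1, ← one_div]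
  exact InnerProductGeometry.angle_lt_arccos_of_lt_inner_div
    (by linarith [one_div_pos.mpr (by linarith : (0 : ℝ) < s)]) (hbound.trans_le hcos)

theorem stmt12 (μ δ : ℝ) (hμ : 0 < μ) (hδ0 : 0 < δ)
    (hδ : δ < (Real.sqrt (μ ^ 2 + 1) - 1) / (Real.sqrt (μ ^ 2 + 1) + 1))
    (W : Matrix (Fin 3) (Fin 3) ℝ) (hW : opNorm3 W ≤ δ)
    (y : EuclideanSpace ℝ (Fin 3)) (hy : y ≠ 0) :
    (1 - δ) / (1 + δ) ≤
        (inner ℝ y (Matrix.toEuclideanCLM (𝕜 := ℝ) (1 - W) y) : ℝ) /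
          (‖y‖ * ‖Matrix.toEuclideanCLM (𝕜 := ℝ) (1 - W) y‖) ∧
      1 / Real.sqrt (μ ^ 2 + 1) < (1 - δ) / (1 + δ) ∧
      InnerProductGeometry.angle y (Matrix.toEuclideanCLM (𝕜 := ℝ) (1 - W) y) <
        Real.arctan μ :=
  stmt12_general μ δ hμ hδ W hW y hy
end
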